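/- For complex numbers s, p, the pair (s,p) lies in the symmetrized bidisc G₂ if and only if 2|s - s̄p| + |s² - 4p| + |s|² < 4. -/

import Mathlib

open Complex ComplexConjugate

def G2 : Set (ℂ × ℂ) :=
  {w | ∃ z₁ z₂ : ℂ, ‖z₁‖ < 1 ∧ ‖z₂‖ < 1 ∧ w = (z₁ + z₂, z₁ * z₂)}

/-!
Write `s = z + w`, `p = z * w`; over `ℂ` such a pair always exists. Since `s² - 4p = (z - w)²`,
the parallelogram law turns the inequality into `‖s - s̄ p‖ < 2 - ‖z‖² - ‖w‖²`, and the identity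
`(2 - ‖z‖² - ‖w‖²)² - ‖s - s̄ p‖² = (4 - ‖s‖²)(1 - ‖z‖²)(1 - ‖w‖²)` shows that this holds exactly
when `‖z‖ < 1` and `‖w‖ < 1`.
-/

theorem exists_add_eq_and_mul_eq {K : Type*} [Field K] [IsAlgClosed K] [NeZero (2 : K)]
    (s p : K) : ∃ z w : K, z + w = s ∧ z * w = p := by
  obtain ⟨q, hq⟩ := IsAlgClosed.exists_eq_mul_self (s ^ 2 - 4 * p)
  refine ⟨(s + q) / 2, (s - q) / 2, by field_simp; ring, ?_⟩
  field_simp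
  linear_combination hq

theorem sq_norm_add_sub_conj_add_mul_mul (z w : ℂ) :
    ‖z + w - conj (z + w) * (z * w)‖ ^ 2
      = (2 - ‖z‖ ^ 2 - ‖w‖ ^ 2) ^ 2 - (4 - ‖z + w‖ ^ 2) * (1 - ‖z‖ ^ 2) * (1 - ‖w‖ ^ 2) := by
  simp only [Complex.sq_norm, Complex.normSq_apply, Complex.add_re, Complex.add_im,
    Complex.sub_re, Complex.sub_im, Complex.mul_re, Complex.mul_im, Complex.conj_re,
    Complex.conj_im]
  ring

theorem lt_two_sub_iff_lt_one_and_lt_one {a b t A : ℝ} (hA : 0 ≤ A) (ht : t ≤ 2 * (a + b))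
    (hA_sq : A ^ 2 = (2 - a - b) ^ 2 - (4 - t) * (1 - a) * (1 - b)) :
    A < 2 - a - b ↔ a < 1 ∧ b < 1 := by
  constructor
  · intro h
    have hab : a + b < 2 := by linarith
    have hprod : 0 < (4 - t) * ((1 - a) * (1 - b)) := by
      nlinarith [pow_lt_pow_left₀ h hA two_ne_zero]
    have hab' : 0 < (1 - a) * (1 - b) := pos_of_mul_pos_right hprod (by linarith)
    constructor <;> nlinarith
  · rintro ⟨ha, hb⟩
    have hprod : 0 < (4 - t) * (1 - a) * (1 - b) :=
      mul_pos (mul_pos (by linarith) (by linarith)) (by linarith)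
    exact (pow_lt_pow_iff_left₀ hA (by linarith) two_ne_zero).1 (by linarith)

theorem norm_lt_one_and_norm_lt_one_iff (z w : ℂ) :
    ‖z‖ < 1 ∧ ‖w‖ < 1 ↔
      2 * ‖z + w - conj (z + w) * (z * w)‖ + ‖(z + w) ^ 2 - 4 * (z * w)‖ + ‖z + w‖ ^ 2 < 4 := by
  have hdisc : ‖(z + w) ^ 2 - 4 * (z * w)‖ = ‖z - w‖ ^ 2 := by rw [← norm_pow]; ring_nf
  have hpar := parallelogram_law_with_norm ℝ z w
  rw [hdisc, ← sq_lt_one_iff₀ (norm_nonneg z), ← sq_lt_one_iff₀ (norm_nonneg w),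
    ← lt_two_sub_iff_lt_one_and_lt_one (norm_nonneg _) (by nlinarith [sq_nonneg ‖z - w‖])
      (sq_norm_add_sub_conj_add_mul_mul z w)]
  constructor <;> intro h <;> linarith

theorem stmt_4 (s p : ℂ) :
    (s, p) ∈ G2 ↔
      2 * ‖s - conj s * p‖ + ‖s ^ 2 - 4 * p‖
          + ‖s‖ ^ 2 < 4 := by
  constructor
  · rintro ⟨z, w, hz, hw, ⟨⟩⟩
    exact (norm_lt_one_and_norm_lt_one_iff z w).1 ⟨hz, hw⟩
  · intro h
    obtain ⟨z, w, rfl, rfl⟩ := exists_add_eq_and_mul_eq s p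
    obtain ⟨hz, hw⟩ := (norm_lt_one_and_norm_lt_one_iff z w).2 h
    exact ⟨z, w, hz, hw, rfl⟩
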